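/- arXiv:1701.04813 — 2 statements merged into one kernel-verified Lean document; each statement's English description precedes it below -/
import Mathlib

section
/- Fix a partial assembly A of an n×n puzzle with q jig types, let E denote the number of edges of its contour graph C(A), and let i ≥ 0 be an integer. Then the probability (over the uniformly random carving ω) that A is feasible and sm(C(A), ω) ≤ i is at most q^{−E+i}. -/
open Finset Filter

noncomputable section

/-- A piece of the `n × n` puzzle, identified with its cell in the original grid. -/
abbrev Cell (n : ℕ) := Fin n × Fin n

/-- The unit vector in direction `d` (`0` = right, `1` = up, `2` = left, `3` = down). -/
def dirVec (d : ZMod 4) : ℤ × ℤ :=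
  if d = 0 then (1, 0) else if d = 1 then (0, 1) else if d = 2 then (-1, 0) else (0, -1)

/-- The integer coordinates of a cell. -/
def cellZ {n : ℕ} (c : Cell n) : ℤ × ℤ := ((c.1 : ℤ), (c.2 : ℤ))

/-- A carving assigns a jig type (one of `q` possibilities) to each of the four
(cyclically ordered) sides of each of the `n²` pieces. -/
abbrev Carving (n q : ℕ) := Cell n → ZMod 4 → Fin q

/-- A carving is valid if each pair of coincident sides of adjacent pieces of the
original grid receives complementary jig types (`ι` is the complementation involution). -/
def IsValidCarving {n q : ℕ} (ι : Fin q → Fin q) (ω : Carving n q) : Prop :=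
  ∀ p p' : Cell n, ∀ d : ZMod 4,
    cellZ p' = cellZ p + dirVec d → ω p' (d + 2) = ι (ω p d)

open scoped Classical in
/-- The probability of the event `P` for a carving chosen uniformly at random among
all valid carvings. -/
def puzzleProb {n q : ℕ} (ι : Fin q → Fin q) (P : Carving n q → Prop) : ℝ :=
  ((Finset.univ.filter fun ω : Carving n q => IsValidCarving ι ω ∧ P ω).card : ℝ) /
  ((Finset.univ.filter fun ω : Carving n q => IsValidCarving ι ω).card : ℝ)

/-- A complete assembly: a bijective placement of the pieces onto the cells of the
`n × n` grid together with an orientation (`ℤ/4`) for each piece. -/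
structure Assembly (n : ℕ) where
  pos : Equiv.Perm (Cell n)
  rot : Cell n → ZMod 4

/-- The planted assembly keeps every piece in its original position and orientation. -/
def planted (n : ℕ) : Assembly n := ⟨Equiv.refl _, fun _ => 0⟩

/-- A complete assembly is feasible for the carving `ω` if all pairs of abutting sides
carry complementary jig types.  The side of piece `p` facing direction `d` after `p` is
rotated by `A.rot p` quarter turns is its original side `d - A.rot p`. -/
def Assembly.Feasible {n q : ℕ} (ι : Fin q → Fin q) (A : Assembly n) (ω : Carving n q) :
    Prop :=
  ∀ p p' : Cell n, ∀ d : ZMod 4,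
    cellZ (A.pos p') = cellZ (A.pos p) + dirVec d →
    ω p' (d + 2 - A.rot p') = ι (ω p (d - A.rot p))

/-- The carving of the grid obtained by reassembling the pieces according to `A`:
side `d` of the grid cell `c` receives the jig type of the corresponding side of the
piece placed on `c`. -/
def Assembly.carving {n q : ℕ} (A : Assembly n) (ω : Carving n q) : Carving n q :=
  fun c d => ω (A.pos.symm c) (d - A.rot (A.pos.symm c))

/-- Rotation of the grid by 90 degrees. -/
def rotCell {n : ℕ} : Equiv.Perm (Cell n) where
  toFun c := (c.2.rev, c.1)
  invFun c := (c.2, c.1.rev)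
  left_inv c := by simp
  right_inv c := by simp

/-- Global rotation of a carving of the grid by 90 degrees. -/
def rotateCarving {n q : ℕ} (ω : Carving n q) : Carving n q :=
  fun c d => ω (rotCell.symm c) (d - 1)

/-- Two solutions are similar if they differ only by a global rotation of the puzzle,
a permutation of pieces with identical carvings, and rotations of pieces whose carving
is rotation-invariant; equivalently, if they induce the same carving of the grid up to
a global rotation. -/
def PuzzleSimilar {n q : ℕ} (A B : Assembly n) (ω : Carving n q) : Prop :=
  ∃ r : Fin 4, B.carving ω = rotateCarving^[r.val] (A.carving ω)

/-- The planted assembly rotated globally by `r` quarter turns. -/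
def rotatedPlanted (n : ℕ) (r : Fin 4) : Assembly n :=
  ⟨rotCell ^ r.val, fun _ => (r.val : ZMod 4)⟩

/-- The cell `c` belongs to the `k × k` window with lower-left corner `(a, b)`. -/
def inWindow {n : ℕ} (a b k : ℕ) (c : Cell n) : Prop :=
  a ≤ c.1.val ∧ c.1.val < a + k ∧ b ≤ c.2.val ∧ c.2.val < b + k

open scoped Classical in
/-- The number of dual edges of the `k × k` window at `(a, b)` (each dual edge recorded
once, as `(c, c', d)` with `d ∈ {right, up}`) whose abutting jig types, for the carving
induced by the assembly `A`, form the complementary pair `{j, ι j}`. -/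
def windowTypeCount {n q : ℕ} (ι : Fin q → Fin q) (A : Assembly n) (ω : Carving n q)
    (a b k : ℕ) (j : Fin q) : ℕ :=
  (Finset.univ.filter fun x : Cell n × Cell n × Fin 2 =>
    inWindow a b k x.1 ∧ inWindow a b k x.2.1 ∧
    cellZ x.2.1 = cellZ x.1 + dirVec (x.2.2.val : ZMod 4) ∧
    (A.carving ω x.1 (x.2.2.val : ZMod 4) = j ∨
      A.carving ω x.1 (x.2.2.val : ZMod 4) = ι j)).card

open scoped Classical in
/-- The shape multiplicity of the `k × k` window at `(a, b)`: the sum, over unordered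
complementary pairs `J = {j, ι j}`, of `⌊(number of dual edges of the window of type J)/2⌋`. -/
def windowSM {n q : ℕ} (ι : Fin q → Fin q) (A : Assembly n) (ω : Carving n q)
    (a b k : ℕ) : ℕ :=
  ∑ j ∈ Finset.univ.filter (fun j : Fin q => j ≤ ι j),
    windowTypeCount ι A ω a b k j / 2

/-- A feasible complete assembly is `k`-good if every `k × k` window touching the boundary
of the puzzle has shape multiplicity at most `1`, and every other `k × k` window has shape
multiplicity at most `2`. -/
def KGood {n q : ℕ} (ι : Fin q → Fin q) (A : Assembly n) (ω : Carving n q) (k : ℕ) :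
    Prop :=
  A.Feasible ι ω ∧
    ∀ a b : ℕ, a + k ≤ n → b + k ≤ n →
      windowSM ι A ω a b k ≤ 2 ∧
      ((a = 0 ∨ b = 0 ∨ a + k = n ∨ b + k = n) → windowSM ι A ω a b k ≤ 1)

/-- A partial assembly: an injective placement of a subset of the pieces into the square
grid `ℤ²`, together with an orientation for each placed piece. -/
structure PartialAssembly (n : ℕ) where
  pieces : Finset (Cell n)
  pos : Cell n → ℤ × ℤ
  rot : Cell n → ZMod 4
  pos_inj : ∀ p ∈ pieces, ∀ p' ∈ pieces, pos p = pos p' → p = p'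

/-- A partial assembly is feasible for `ω` if all pairs of abutting sides carry
complementary jig types. -/
def PartialAssembly.Feasible {n q : ℕ} (ι : Fin q → Fin q) (A : PartialAssembly n)
    (ω : Carving n q) : Prop :=
  ∀ p ∈ A.pieces, ∀ p' ∈ A.pieces, ∀ d : ZMod 4,
    A.pos p' = A.pos p + dirVec d →
    ω p' (d + 2 - A.rot p') = ι (ω p (d - A.rot p))

open scoped Classical in
/-- The edges of the contour graph `C(A)`: the dual edges of `A` (each recorded once, as
`(p, p', d)` with `d ∈ {right, up}`, `p'` being placed in direction `d` from `p`) whose two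
abutting piece sides are not coincident in the planted assembly. -/
def contourEdges {n : ℕ} (A : PartialAssembly n) : Finset (Cell n × Cell n × Fin 2) :=
  Finset.univ.filter fun x =>
    x.1 ∈ A.pieces ∧ x.2.1 ∈ A.pieces ∧
    A.pos x.2.1 = A.pos x.1 + dirVec (x.2.2.val : ZMod 4) ∧
    ¬ (A.rot x.2.1 = A.rot x.1 ∧
        cellZ x.2.1 = cellZ x.1 + dirVec ((x.2.2.val : ZMod 4) - A.rot x.1))

/-- The piece sides lying across the edges of the contour graph of `A`. -/
def crossingSides {n : ℕ} (A : PartialAssembly n) : Set (Cell n × ZMod 4) :=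
  {ps | ∃ x ∈ contourEdges A,
    ps = (x.1, (x.2.2.val : ZMod 4) - A.rot x.1) ∨
    ps = (x.2.1, (x.2.2.val : ZMod 4) + 2 - A.rot x.2.1)}

/-- Two piece sides are coincident in the planted assembly. -/
def CoincidentPlanted {n : ℕ} (ps ps' : Cell n × ZMod 4) : Prop :=
  cellZ ps'.1 = cellZ ps.1 + dirVec ps.2 ∧ ps'.2 = ps.2 + 2

open scoped Classical in
/-- The shape multiplicity `sm(C(A), ω)` of the contour graph of `A` with respect to `ω`:
the sum, over unordered complementary pairs `J = {j, ι j}`, of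
`⌊(number of contour edges of type J)/2⌋`. -/
def contourSM {n q : ℕ} (ι : Fin q → Fin q) (A : PartialAssembly n) (ω : Carving n q) :
    ℕ :=
  ∑ j ∈ Finset.univ.filter (fun j : Fin q => j ≤ ι j),
    ((contourEdges A).filter fun x =>
      ω x.1 ((x.2.2.val : ZMod 4) - A.rot x.1) = j ∨
      ω x.1 ((x.2.2.val : ZMod 4) - A.rot x.1) = ι j).card / 2

end

/-!
Regard a carving as a colouring `ω` of the piece sides, subject only to the planted matching
`m` (mated sides carry complementary types). Each contour edge joins two sides `(s, e)` on
which feasibility imposes `ω e = ι (ω s)`, and these pairs form a matching disjoint from `m`.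
Resampling the type of `e` together with that of its mate `m e` is a `q`-to-one map from the
colourings satisfying the pair `(s, e)` to colourings that no longer need to. If `m e` lies on
no other contour pair, dropping `(s, e)` thus gains a factor `q`. Otherwise `m e` lies on a
second pair, which is then forced to have the type of `(s, e)`; dropping both gains only one
factor `q` but lowers the shape multiplicity by one. Induction on the number of pairs gives
`#{feasible, sm ≤ i} * q ^ E ≤ #{valid} * q ^ i`.
-/

open Function

section SideColorings

variable {S α : Type*} {ι : α → α} {m : S → S}

/-- Validity of a colouring of the sides `S`: `m` is the planted matching, whose fixed points
are the boundary sides. -/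
def IsMateCompatible (ι : α → α) (m : S → S) (ω : S → α) : Prop :=
  ∀ s, m s ≠ s → ω (m s) = ι (ω s)

def SatisfiesPairs (ι : α → α) (T : Finset (S × S)) (ω : S → α) : Prop :=
  ∀ t ∈ T, ω t.2 = ι (ω t.1)

def AvoidsSide (T : Finset (S × S)) (x : S) : Prop :=
  ∀ t ∈ T, t.1 ≠ x ∧ t.2 ≠ x

structure IsNonPlantedMatching [DecidableEq S] (m : S → S) (T : Finset (S × S)) : Prop where
  fst_ne_snd : ∀ t ∈ T, t.1 ≠ t.2
  mate_fst_ne_snd : ∀ t ∈ T, m t.1 ≠ t.2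
  avoids_erase : ∀ t ∈ T, AvoidsSide (T.erase t) t.1 ∧ AvoidsSide (T.erase t) t.2

def resample [DecidableEq S] (ι : α → α) (m : S → S) (ω : S → α) (e : S) (a : α) : S → α :=
  update (update ω (m e) (ι a)) e a

lemma AvoidsSide.mono {T U : Finset (S × S)} {x : S} (h : AvoidsSide T x) (hU : U ⊆ T) :
    AvoidsSide U x :=
  fun t ht => h t (hU ht)

lemma satisfiesPairs_congr {T : Finset (S × S)} {ω ω' : S → α}
    (h : ∀ t ∈ T, ω t.1 = ω' t.1 ∧ ω t.2 = ω' t.2) :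
    SatisfiesPairs ι T ω ↔ SatisfiesPairs ι T ω' := by
  refine forall₂_congr fun t ht => ?_
  rw [(h t ht).1, (h t ht).2]

section Matching

variable [DecidableEq S]

lemma IsNonPlantedMatching.mono {T U : Finset (S × S)} (h : IsNonPlantedMatching m T)
    (hU : U ⊆ T) : IsNonPlantedMatching m U where
  fst_ne_snd t ht := h.fst_ne_snd t (hU ht)
  mate_fst_ne_snd t ht := h.mate_fst_ne_snd t (hU ht)
  avoids_erase t ht := ⟨(h.avoids_erase t (hU ht)).1.mono (erase_subset_erase t hU),
    (h.avoids_erase t (hU ht)).2.mono (erase_subset_erase t hU)⟩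

lemma IsNonPlantedMatching.fst_ne_mate_snd (hm : Involutive m) {T : Finset (S × S)}
    (hT : IsNonPlantedMatching m T) {t : S × S} (ht : t ∈ T) : t.1 ≠ m t.2 :=
  fun h => hT.mate_fst_ne_snd t ht (by rw [h, hm])

lemma resample_self (ω : S → α) (e : S) (a : α) : resample ι m ω e a e = a := by
  simp [resample]

lemma resample_of_ne {ω : S → α} {e x : S} (a : α) (hx : x ≠ e) (hx' : x ≠ m e) :
    resample ι m ω e a x = ω x := by
  simp [resample, hx, hx']

lemma resample_mate {ω : S → α} {e : S} (a : α) (he : m e ≠ e) :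
    resample ι m ω e a (m e) = ι a := by
  simp [resample, he]

lemma IsMateCompatible.resample (hι : Involutive ι) (hm : Involutive m) {ω : S → α}
    (hω : IsMateCompatible ι m ω) (e : S) (a : α) :
    IsMateCompatible ι m (resample ι m ω e a) := by
  intro s hs
  by_cases hse : s = e
  · subst hse
    rw [resample_mate a hs, resample_self]
  by_cases hsme : s = m e
  · subst hsme
    rw [hm e, resample_self, resample_mate a hse, hι]
  have hms : m s ≠ e := fun h => hsme (by rw [← h, hm])
  have hmsme : m s ≠ m e := fun h => hse (hm.injective h)
  rw [resample_of_ne a hms hmsme, resample_of_ne a hse hsme]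
  exact hω s hs

lemma resample_resample {ω : S → α} (hω : IsMateCompatible ι m ω) (e : S) (a : α) :
    resample ι m (resample ι m ω e a) e (ω e) = ω := by
  funext x
  by_cases hxe : x = e
  · subst hxe
    rw [resample_self]
  by_cases hxme : x = m e
  · subst hxme
    have hme : m e ≠ e := hxe
    rw [resample_mate _ hme, hω e fun h => hme (by rw [h])]
  rw [resample_of_ne _ hxe hxme, resample_of_ne _ hxe hxme]

end Matching

section ShapeMultiplicity

variable [LinearOrder α]

def typeCount (ι : α → α) (T : Finset (S × S)) (ω : S → α) (j : α) : ℕ :=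
  #{t ∈ T | ω t.1 = j ∨ ω t.1 = ι j}

lemma typeCount_mono {T U : Finset (S × S)} (hU : U ⊆ T) (ω : S → α) (j : α) :
    typeCount ι U ω j ≤ typeCount ι T ω j :=
  card_le_card (filter_subset_filter _ hU)

lemma typeCount_insert [DecidableEq S] {T : Finset (S × S)} {t : S × S} (ht : t ∉ T)
    (ω : S → α) (j : α) :
    typeCount ι (insert t T) ω j =
      typeCount ι T ω j + if ω t.1 = j ∨ ω t.1 = ι j then 1 else 0 := by
  unfold typeCount
  rw [filter_insert]
  split_ifs
  · exact card_insert_of_notMem fun h => ht (mem_of_mem_filter _ h)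
  · rfl

variable [Fintype α]

/-- Each unordered pair `{j, ι j}` is counted once, through its representative `j ≤ ι j`. -/
def shapeMult (ι : α → α) (T : Finset (S × S)) (ω : S → α) : ℕ :=
  ∑ j with j ≤ ι j, typeCount ι T ω j / 2

lemma shapeMult_mono {T U : Finset (S × S)} (hU : U ⊆ T) (ω : S → α) :
    shapeMult ι U ω ≤ shapeMult ι T ω :=
  sum_le_sum fun j _ => Nat.div_le_div_right (typeCount_mono hU ω j)

lemma shapeMult_congr {T : Finset (S × S)} {ω ω' : S → α}
    (h : ∀ t ∈ T, ω t.1 = ω' t.1) : shapeMult ι T ω = shapeMult ι T ω' := by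
  unfold shapeMult typeCount
  refine sum_congr rfl fun j _ => ?_
  rw [filter_congr fun t ht => by rw [h t ht]]

lemma sum_ite_mem_pair_eq_one (hι : Involutive ι) (a : α) :
    ∑ j with j ≤ ι j, (if a = j ∨ a = ι j then 1 else 0) = 1 := by
  rw [sum_boole, Nat.cast_id, card_eq_one]
  refine ⟨min a (ι a), ?_⟩
  ext j
  simp only [mem_filter, mem_univ, true_and, mem_singleton]
  have := hι a
  have := hι j
  constructor
  · rintro ⟨hj, rfl | rfl⟩ <;> grind
  · rintro rfl
    grind

lemma shapeMult_insert_insert [DecidableEq S] (hι : Involutive ι) {T : Finset (S × S)}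
    {t t' : S × S} (ht : t ∉ insert t' T) (ht' : t' ∉ T) {ω : S → α}
    (hsame : ω t'.1 = ω t.1 ∨ ω t'.1 = ι (ω t.1)) :
    shapeMult ι (insert t (insert t' T)) ω = shapeMult ι T ω + 1 := by
  have hiff : ∀ j, (ω t'.1 = j ∨ ω t'.1 = ι j) ↔ (ω t.1 = j ∨ ω t.1 = ι j) := by
    intro j
    have := hι (ω t.1)
    have := hι j
    rcases hsame with h | h <;> grind
  have hterm : ∀ j, typeCount ι (insert t (insert t' T)) ω j / 2 =
      typeCount ι T ω j / 2 + if ω t.1 = j ∨ ω t.1 = ι j then 1 else 0 := by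
    intro j
    rw [typeCount_insert ht, typeCount_insert ht', if_congr (hiff j) rfl rfl]
    split_ifs <;> omega
  simp only [shapeMult, hterm, sum_add_distrib, sum_ite_mem_pair_eq_one hι]

/-- Two pairs joined by a planted pair of sides carry the same type, so together they
contribute exactly one to the shape multiplicity. -/
lemma shapeMult_eq_erase_erase_add_one [DecidableEq S] (hι : Involutive ι)
    {T : Finset (S × S)} (hT : IsNonPlantedMatching m T) {t t' : S × S} (ht : t ∈ T)
    (ht' : t' ∈ T.erase t) (hmate : t'.1 = m t.2 ∨ t'.2 = m t.2) {ω : S → α}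
    (hcomp : IsMateCompatible ι m ω) (hsat : SatisfiesPairs ι T ω) :
    shapeMult ι T ω = shapeMult ι ((T.erase t).erase t') ω + 1 := by
  have hmate_ne : m t.2 ≠ t.2 := by
    have := (hT.avoids_erase t ht).2 t' ht'
    rcases hmate with h | h <;> rw [← h] <;> tauto
  have hωmate : ω (m t.2) = ω t.1 := by
    rw [hcomp _ hmate_ne, hsat t ht, hι]
  have hsame : ω t'.1 = ω t.1 ∨ ω t'.1 = ι (ω t.1) := by
    rcases hmate with h | h
    · exact .inl (h ▸ hωmate)
    · right
      rw [← hωmate, ← h, hsat t' (mem_of_mem_erase ht'), hι]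
  conv_lhs => rw [← insert_erase ht, ← insert_erase ht']
  refine shapeMult_insert_insert hι ?_ (notMem_erase t' _) hsame
  simp only [mem_insert, mem_erase]
  rintro (h | h)
  · exact (ne_of_mem_erase ht') h.symm
  · exact h.2.1 rfl

end ShapeMultiplicity

section Counting

variable [Fintype S] [DecidableEq S] [Fintype α] [LinearOrder α]

open scoped Classical in
noncomputable def lowShapeEvent (ι : α → α) (m : S → S) (T : Finset (S × S)) (i : ℕ) :
    Finset (S → α) :=
  {ω | IsMateCompatible ι m ω ∧ SatisfiesPairs ι T ω ∧ shapeMult ι T ω ≤ i}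

open scoped Classical in
noncomputable def mateCompatible (ι : α → α) (m : S → S) : Finset (S → α) :=
  {ω | IsMateCompatible ι m ω}

lemma mem_lowShapeEvent {T : Finset (S × S)} {i : ℕ} {ω : S → α} :
    ω ∈ lowShapeEvent ι m T i ↔
      IsMateCompatible ι m ω ∧ SatisfiesPairs ι T ω ∧ shapeMult ι T ω ≤ i := by
  simp [lowShapeEvent]

lemma card_mul_le_card_lowShapeEvent (hι : Involutive ι) (hm : Involutive m)
    {F : Finset (S → α)} {T : Finset (S × S)} {s e : S} {i : ℕ}
    (hse : s ≠ e) (hsme : s ≠ m e) (he : AvoidsSide T e) (hme : AvoidsSide T (m e))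
    (hF : ∀ ω ∈ F, IsMateCompatible ι m ω ∧ ω e = ι (ω s) ∧
      SatisfiesPairs ι T ω ∧ shapeMult ι T ω ≤ i) :
    #F * Fintype.card α ≤ #(lowShapeEvent ι m T i) := by
  rw [← card_univ, ← card_product]
  refine card_le_card_of_injOn (fun p => resample ι m p.1 e p.2) ?_ ?_
  · rintro ⟨ω, a⟩ hp
    obtain ⟨hcomp, -, hsat, hsm⟩ := hF ω (mem_product.1 hp).1
    have hagree : ∀ t ∈ T,
        resample ι m ω e a t.1 = ω t.1 ∧ resample ι m ω e a t.2 = ω t.2 := fun t ht =>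
      ⟨resample_of_ne a (he t ht).1 (hme t ht).1, resample_of_ne a (he t ht).2 (hme t ht).2⟩
    rw [mem_coe, mem_lowShapeEvent, satisfiesPairs_congr hagree,
      shapeMult_congr fun t ht => (hagree t ht).1]
    exact ⟨hcomp.resample hι hm e a, hsat, hsm⟩
  · rintro ⟨ω, a⟩ hp ⟨ω', a'⟩ hp' h
    replace hp := hF ω (mem_product.1 hp).1
    replace hp' := hF ω' (mem_product.1 hp').1
    dsimp only at h
    have ha : a = a' := by simpa only [resample_self] using congrFun h e
    -- `s` is untouched by the resampling, and `ω e` is determined by `ω s`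
    have hωe : ω e = ω' e := by
      rw [hp.2.1, hp'.2.1, ← resample_of_ne (ω := ω) a hse hsme,
        ← resample_of_ne (ω := ω') a' hse hsme, h]
    refine Prod.ext ?_ ha
    calc ω = resample ι m (resample ι m ω e a) e (ω e) := (resample_resample hp.1 e a).symm
      _ = resample ι m (resample ι m ω' e a') e (ω' e) := by rw [h, hωe]
      _ = ω' := resample_resample hp'.1 e a'

lemma card_lowShapeEvent_mul_le_erase (hι : Involutive ι) (hm : Involutive m)
    {T : Finset (S × S)} (hT : IsNonPlantedMatching m T) {t : S × S} (ht : t ∈ T)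
    (hfree : AvoidsSide (T.erase t) (m t.2)) (i : ℕ) :
    #(lowShapeEvent ι m T i) * Fintype.card α ≤ #(lowShapeEvent ι m (T.erase t) i) := by
  refine card_mul_le_card_lowShapeEvent hι hm (hT.fst_ne_snd t ht) (hT.fst_ne_mate_snd hm ht)
    (hT.avoids_erase t ht).2 hfree fun ω hω => ?_
  obtain ⟨hcomp, hsat, hsm⟩ := mem_lowShapeEvent.1 hω
  exact ⟨hcomp, hsat t ht, fun t' ht' => hsat t' (mem_of_mem_erase ht'),
    (shapeMult_mono (erase_subset t T) ω).trans hsm⟩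

lemma card_lowShapeEvent_succ_mul_le_erase_erase (hι : Involutive ι) (hm : Involutive m)
    {T : Finset (S × S)} (hT : IsNonPlantedMatching m T) {t t' : S × S} (ht : t ∈ T)
    (ht' : t' ∈ T.erase t) (hmate : t'.1 = m t.2 ∨ t'.2 = m t.2) (i : ℕ) :
    #(lowShapeEvent ι m T (i + 1)) * Fintype.card α ≤
      #(lowShapeEvent ι m ((T.erase t).erase t') i) := by
  have hsub : (T.erase t).erase t' ⊆ T.erase t' := by
    rw [erase_right_comm]
    exact erase_subset _ _
  have hfree : AvoidsSide ((T.erase t).erase t') (m t.2) := by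
    have := hT.avoids_erase t' (mem_of_mem_erase ht')
    rcases hmate with h | h <;> rw [← h]
    exacts [this.1.mono hsub, this.2.mono hsub]
  refine card_mul_le_card_lowShapeEvent hι hm (hT.fst_ne_snd t ht) (hT.fst_ne_mate_snd hm ht)
    ((hT.avoids_erase t ht).2.mono (erase_subset _ _)) hfree fun ω hω => ?_
  obtain ⟨hcomp, hsat, hsm⟩ := mem_lowShapeEvent.1 hω
  rw [shapeMult_eq_erase_erase_add_one hι hT ht ht' hmate hcomp hsat] at hsm
  exact ⟨hcomp, hsat t ht, fun t'' ht'' => hsat t'' (mem_of_mem_erase (mem_of_mem_erase ht'')),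
    by omega⟩

lemma lowShapeEvent_zero_eq_empty (hι : Involutive ι) {T : Finset (S × S)}
    (hT : IsNonPlantedMatching m T) {t t' : S × S} (ht : t ∈ T) (ht' : t' ∈ T.erase t)
    (hmate : t'.1 = m t.2 ∨ t'.2 = m t.2) : lowShapeEvent ι m T 0 = ∅ := by
  refine eq_empty_of_forall_notMem fun ω hω => ?_
  obtain ⟨hcomp, hsat, hsm⟩ := mem_lowShapeEvent.1 hω
  rw [shapeMult_eq_erase_erase_add_one hι hT ht ht' hmate hcomp hsat] at hsm
  omega

theorem card_lowShapeEvent_mul_pow_le [Nonempty α] (hι : Involutive ι) (hm : Involutive m)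
    {T : Finset (S × S)} (hT : IsNonPlantedMatching m T) (i : ℕ) :
    #(lowShapeEvent ι m T i) * Fintype.card α ^ #T ≤
      #(mateCompatible ι m) * Fintype.card α ^ i := by
  induction T using Finset.strongInduction generalizing i with
  | H T ih =>
  set q := Fintype.card α
  rcases T.eq_empty_or_nonempty with rfl | ⟨t, ht⟩
  · rw [card_empty, pow_zero, mul_one]
    refine le_mul_of_le_of_one_le (card_le_card fun ω hω => ?_)
      (Nat.one_le_pow _ _ Fintype.card_pos)
    simpa [mateCompatible] using (mem_lowShapeEvent.1 hω).1
  have hcard : #T = #(T.erase t) + 1 := (card_erase_add_one ht).symm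
  by_cases hfree : AvoidsSide (T.erase t) (m t.2)
  · calc #(lowShapeEvent ι m T i) * q ^ #T
        = #(lowShapeEvent ι m T i) * q * q ^ #(T.erase t) := by rw [hcard, pow_succ']; ring
      _ ≤ #(lowShapeEvent ι m (T.erase t) i) * q ^ #(T.erase t) :=
        Nat.mul_le_mul_right _ (card_lowShapeEvent_mul_le_erase hι hm hT ht hfree i)
      _ ≤ #(mateCompatible ι m) * q ^ i :=
        ih _ (erase_ssubset ht) (hT.mono (erase_subset t T)) i
  obtain ⟨t', ht', hmate⟩ : ∃ t' ∈ T.erase t, t'.1 = m t.2 ∨ t'.2 = m t.2 := by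
    simpa only [AvoidsSide, not_forall, not_and_or, not_not, exists_prop] using hfree
  have hcard' : #(T.erase t) = #((T.erase t).erase t') + 1 := (card_erase_add_one ht').symm
  cases i with
  | zero => simp [lowShapeEvent_zero_eq_empty hι hT ht ht' hmate]
  | succ i =>
  calc #(lowShapeEvent ι m T (i + 1)) * q ^ #T
      = #(lowShapeEvent ι m T (i + 1)) * q * q ^ #((T.erase t).erase t') * q := by
        rw [hcard, hcard', pow_succ, pow_succ']; ring
    _ ≤ #(lowShapeEvent ι m ((T.erase t).erase t') i) * q ^ #((T.erase t).erase t') * q :=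
      Nat.mul_le_mul_right _ (Nat.mul_le_mul_right _
        (card_lowShapeEvent_succ_mul_le_erase_erase hι hm hT ht ht' hmate i))
    _ ≤ #(mateCompatible ι m) * q ^ i * q :=
      Nat.mul_le_mul_right _ (ih _ ((erase_ssubset ht').trans (erase_ssubset ht))
        (hT.mono ((erase_subset _ _).trans (erase_subset _ _))) i)
    _ = #(mateCompatible ι m) * q ^ (i + 1) := by rw [pow_succ, mul_assoc]

end Counting

end SideColorings

lemma div_le_zpow_of_mul_pow_le {a b q E i : ℕ} (hq : 0 < q) (h : a * q ^ E ≤ b * q ^ i) :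
    (a / b : ℝ) ≤ (q : ℝ) ^ (-(E : ℤ) + i) := by
  rcases Nat.eq_zero_or_pos b with rfl | hb
  · rw [Nat.cast_zero, div_zero]
    positivity
  have hqE : (0 : ℝ) < (q : ℝ) ^ E := by positivity
  rw [zpow_add₀ (by positivity), zpow_neg, zpow_natCast, zpow_natCast, inv_mul_eq_div,
    div_le_div_iff₀ (by positivity) hqE]
  exact_mod_cast (by linarith : a * q ^ E ≤ q ^ i * b)

section Puzzle

variable {n q : ℕ}

lemma cellZ_injective : Injective (cellZ (n := n)) := by
  intro a b h
  simp only [cellZ, Prod.mk.injEq, Nat.cast_inj] at h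
  exact Prod.ext (Fin.ext h.1) (Fin.ext h.2)

lemma dirVec_add_two : ∀ d : ZMod 4, dirVec (d + 2) = -dirVec d := by decide

lemma zmod_four_add_two_ne_self : ∀ d : ZMod 4, d + 2 ≠ d := by decide

lemma natCast_fin_two_injective : Injective fun d : Fin 2 => (d.val : ZMod 4) := by decide

lemma natCast_fin_two_ne_add_two : ∀ d d' : Fin 2, (d.val : ZMod 4) ≠ d'.val + 2 := by decide

open scoped Classical in
/-- The planted matching of piece sides: side `d` of `p` is matched with the coincident side
`d + 2` of the neighbour of `p` in direction `d`; boundary sides are fixed. -/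
noncomputable def plantedMate (n : ℕ) (s : Cell n × ZMod 4) : Cell n × ZMod 4 :=
  if h : ∃ p : Cell n, cellZ p = cellZ s.1 + dirVec s.2 then (h.choose, s.2 + 2) else s

lemma plantedMate_of_adj {s : Cell n × ZMod 4} {p : Cell n}
    (hp : cellZ p = cellZ s.1 + dirVec s.2) : plantedMate n s = (p, s.2 + 2) := by
  have h : ∃ p : Cell n, cellZ p = cellZ s.1 + dirVec s.2 := ⟨p, hp⟩
  rw [plantedMate, dif_pos h, cellZ_injective (h.choose_spec.trans hp.symm)]

lemma plantedMate_of_not_adj {s : Cell n × ZMod 4}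
    (h : ¬∃ p : Cell n, cellZ p = cellZ s.1 + dirVec s.2) : plantedMate n s = s := by
  rw [plantedMate, dif_neg h]

lemma plantedMate_involutive : Involutive (plantedMate n) := by
  intro s
  by_cases h : ∃ p : Cell n, cellZ p = cellZ s.1 + dirVec s.2
  · obtain ⟨p, hp⟩ := h
    rw [plantedMate_of_adj hp, plantedMate_of_adj (p := s.1)]
    · rw [add_assoc, show (2 + 2 : ZMod 4) = 0 by decide, add_zero]
    · rw [dirVec_add_two, hp, add_neg_cancel_right]
  · rw [plantedMate_of_not_adj h, plantedMate_of_not_adj h]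

lemma isValidCarving_iff_isMateCompatible {ι : Fin q → Fin q} {Ω : Carving n q} :
    IsValidCarving ι Ω ↔ IsMateCompatible ι (plantedMate n) (uncurry Ω) := by
  constructor
  · intro h s hs
    by_cases hadj : ∃ p : Cell n, cellZ p = cellZ s.1 + dirVec s.2
    · obtain ⟨p, hp⟩ := hadj
      rw [plantedMate_of_adj hp]
      exact h s.1 p s.2 hp
    · exact absurd (plantedMate_of_not_adj hadj) hs
  · intro h p p' d hp'
    have hmate := plantedMate_of_adj (s := (p, d)) hp'
    have hne : plantedMate n (p, d) ≠ (p, d) := by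
      rw [hmate]
      exact fun h' => zmod_four_add_two_ne_self d (congrArg Prod.snd h')
    have := h (p, d) hne
    rwa [hmate] at this

def contourSides (A : PartialAssembly n) (x : Cell n × Cell n × Fin 2) :
    (Cell n × ZMod 4) × (Cell n × ZMod 4) :=
  ((x.1, x.2.2.val - A.rot x.1), (x.2.1, x.2.2.val + 2 - A.rot x.2.1))

def contourPairs (A : PartialAssembly n) : Finset ((Cell n × ZMod 4) × (Cell n × ZMod 4)) :=
  (contourEdges A).image (contourSides A)

lemma mem_contourEdges {A : PartialAssembly n} {x : Cell n × Cell n × Fin 2} :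
    x ∈ contourEdges A ↔
      x.1 ∈ A.pieces ∧ x.2.1 ∈ A.pieces ∧
      A.pos x.2.1 = A.pos x.1 + dirVec (x.2.2.val : ZMod 4) ∧
      ¬(A.rot x.2.1 = A.rot x.1 ∧
          cellZ x.2.1 = cellZ x.1 + dirVec ((x.2.2.val : ZMod 4) - A.rot x.1)) := by
  simp [contourEdges]

lemma contourSides_fst_injOn (A : PartialAssembly n) :
    Set.InjOn (fun x => (contourSides A x).1) (contourEdges A) := by
  intro x hx y hy h
  simp only [contourSides, Prod.mk.injEq] at h
  obtain ⟨h1, h2⟩ := h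
  rw [h1, sub_left_inj] at h2
  have hd := natCast_fin_two_injective h2
  rw [mem_coe, mem_contourEdges] at hx hy
  have h3 := A.pos_inj _ hx.2.1 _ hy.2.1 (by rw [hx.2.2.1, hy.2.2.1, h1, h2])
  exact Prod.ext h1 (Prod.ext h3 hd)

lemma contourSides_snd_injOn (A : PartialAssembly n) :
    Set.InjOn (fun x => (contourSides A x).2) (contourEdges A) := by
  intro x hx y hy h
  simp only [contourSides, Prod.mk.injEq] at h
  obtain ⟨h1, h2⟩ := h
  rw [h1, sub_left_inj, add_left_inj] at h2
  have hd := natCast_fin_two_injective h2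
  rw [mem_coe, mem_contourEdges] at hx hy
  have h3 := A.pos_inj _ hx.1 _ hy.1
    (add_right_cancel (by rw [← hx.2.2.1, h2, ← hy.2.2.1, h1]))
  exact Prod.ext h3 (Prod.ext h1 hd)

lemma contourSides_fst_ne_snd (A : PartialAssembly n) (x y : Cell n × Cell n × Fin 2) :
    (contourSides A x).1 ≠ (contourSides A y).2 := by
  simp only [contourSides, ne_eq, Prod.mk.injEq, not_and]
  intro h1 h2
  rw [h1] at h2
  exact natCast_fin_two_ne_add_two _ _ (sub_left_injective h2)

lemma plantedMate_contourSides_fst_ne_snd {A : PartialAssembly n} {x : Cell n × Cell n × Fin 2}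
    (hx : x ∈ contourEdges A) : plantedMate n (contourSides A x).1 ≠ (contourSides A x).2 := by
  rw [mem_contourEdges] at hx
  by_cases hadj : ∃ p : Cell n, cellZ p = cellZ x.1 + dirVec (x.2.2.val - A.rot x.1)
  · obtain ⟨p, hp⟩ := hadj
    simp only [contourSides]
    rw [plantedMate_of_adj hp]
    simp only [ne_eq, Prod.mk.injEq, not_and]
    rintro rfl hrot
    exact hx.2.2.2 ⟨by linear_combination hrot, hp⟩
  · rw [plantedMate_of_not_adj hadj]
    exact contourSides_fst_ne_snd A x x

lemma isNonPlantedMatching_contourPairs (A : PartialAssembly n) :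
    IsNonPlantedMatching (plantedMate n) (contourPairs A) where
  fst_ne_snd := by
    simp only [contourPairs, forall_mem_image]
    exact fun x _ => contourSides_fst_ne_snd A x x
  mate_fst_ne_snd := by
    simp only [contourPairs, forall_mem_image]
    exact fun x hx => plantedMate_contourSides_fst_ne_snd hx
  avoids_erase := by
    simp only [contourPairs, forall_mem_image]
    intro x hx
    have hsides : ∀ t ∈ (contourPairs A).erase (contourSides A x), ∃ y ∈ contourEdges A,
        y ≠ x ∧ t = contourSides A y := by
      simp only [contourPairs, mem_erase, mem_image]
      rintro t ⟨hne, y, hy, rfl⟩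
      exact ⟨y, hy, fun h => hne (h ▸ rfl), rfl⟩
    refine ⟨fun t ht => ?_, fun t ht => ?_⟩ <;> obtain ⟨y, hy, hyx, rfl⟩ := hsides t ht
    · exact ⟨fun h => hyx (contourSides_fst_injOn A hy hx h),
        fun h => contourSides_fst_ne_snd A x y h.symm⟩
    · exact ⟨contourSides_fst_ne_snd A y x, fun h => hyx (contourSides_snd_injOn A hy hx h)⟩

lemma card_contourPairs (A : PartialAssembly n) : #(contourPairs A) = #(contourEdges A) :=
  card_image_of_injOn fun _ hx _ hy h => contourSides_fst_injOn A hx hy (congrArg Prod.fst h)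

lemma PartialAssembly.Feasible.satisfiesPairs {ι : Fin q → Fin q} {A : PartialAssembly n}
    {Ω : Carving n q} (h : A.Feasible ι Ω) :
    SatisfiesPairs ι (contourPairs A) (uncurry Ω) := by
  simp only [SatisfiesPairs, contourPairs, forall_mem_image]
  intro x hx
  rw [mem_contourEdges] at hx
  exact h x.1 hx.1 x.2.1 hx.2.1 _ hx.2.2.1

lemma contourSM_eq_shapeMult (ι : Fin q → Fin q) (A : PartialAssembly n) (Ω : Carving n q) :
    contourSM ι A Ω = shapeMult ι (contourPairs A) (uncurry Ω) := by
  unfold contourSM shapeMult typeCount contourPairs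
  refine sum_congr rfl fun j _ => ?_
  rw [filter_image, card_image_of_injOn]
  · rfl
  · exact fun _ hx _ hy h =>
      contourSides_fst_injOn A (mem_filter.1 hx).1 (mem_filter.1 hy).1 (congrArg Prod.fst h)

open scoped Classical in
lemma card_feasible_le_card_lowShapeEvent (ι : Fin q → Fin q) (A : PartialAssembly n)
    (i : ℕ) :
    #{Ω : Carving n q | IsValidCarving ι Ω ∧ A.Feasible ι Ω ∧ contourSM ι A Ω ≤ i} ≤
      #(lowShapeEvent ι (plantedMate n) (contourPairs A) i) := by
  refine card_le_card_of_injOn uncurry (fun Ω hΩ => ?_) uncurry_injective.injOn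
  obtain ⟨hvalid, hfeas, hsm⟩ := (mem_filter.1 hΩ).2
  rw [mem_coe, mem_lowShapeEvent, ← isValidCarving_iff_isMateCompatible,
    ← contourSM_eq_shapeMult]
  exact ⟨hvalid, hfeas.satisfiesPairs, hsm⟩

open scoped Classical in
lemma card_mateCompatible_le_card_isValidCarving (ι : Fin q → Fin q) :
    #(mateCompatible ι (plantedMate n)) ≤ #{Ω : Carving n q | IsValidCarving ι Ω} := by
  refine card_le_card_of_injOn curry (fun ω hω => ?_) curry_injective.injOn
  simpa [mateCompatible, isValidCarving_iff_isMateCompatible] using hω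

end Puzzle

theorem statement_10_general (n q : ℕ) (hq : 2 ≤ q)
    (ι : Fin q → Fin q) (hι : ι ∘ ι = id)
    (A : PartialAssembly n) (i : ℕ) :
    puzzleProb ι (fun ω : Carving n q => A.Feasible ι ω ∧ contourSM ι A ω ≤ i) ≤
      (q : ℝ) ^ (-((contourEdges A).card : ℤ) + (i : ℤ)) := by
  have : Nonempty (Fin q) := ⟨⟨0, by omega⟩⟩
  have hι' : Involutive ι := congrFun hι
  refine div_le_zpow_of_mul_pow_le (by omega) ?_
  calc _ ≤ #(lowShapeEvent ι (plantedMate n) (contourPairs A) i) * q ^ #(contourPairs A) := by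
        rw [card_contourPairs]
        exact Nat.mul_le_mul_right _ (by convert card_feasible_le_card_lowShapeEvent ι A i)
    _ ≤ #(mateCompatible ι (plantedMate n)) * q ^ i := by
        simpa using card_lowShapeEvent_mul_pow_le hι' plantedMate_involutive
          (isNonPlantedMatching_contourPairs A) i
    _ ≤ _ := Nat.mul_le_mul_right _ (card_mateCompatible_le_card_isValidCarving ι)

/-- Fix a partial assembly `A` of an `n × n` puzzle with `q` jig types,
let `E` be the number of edges of its contour graph `C(A)`, and let `i ≥ 0`.  Then the
probability (over the uniformly random carving) that `A` is feasible and
`sm(C(A), ω) ≤ i` is at most `q^{−E+i}`. -/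
theorem statement_10 (n q : ℕ) (hn : 1 ≤ n) (hq : 2 ≤ q)
    (ι : Fin q → Fin q) (hι : ι ∘ ι = id)
    (A : PartialAssembly n) (i : ℕ) :
    puzzleProb ι (fun ω : Carving n q => A.Feasible ι ω ∧ contourSM ι A ω ≤ i) ≤
      (q : ℝ) ^ (-((contourEdges A).card : ℤ) + (i : ℤ)) :=
  statement_10_general n q hq ι hι A i
end

section
/- For every ε' > 0 there exist constants M > 0 and K > 0 such that for all nonnegative integers E and F with 2E − 4F + 4 ≥ 0, binom(3E − 4F + 4, 2E − 4F + 4) ≤ K · M^{E − 2F} · (1 + ε')^{E}. -/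
theorem aux_choose_le (t : ℝ) (ht : 0 ≤ t) (n k : ℕ) (hk : k ≤ n) :
    (n.choose k : ℝ) * t ^ k ≤ (1 + t) ^ n := by
  rw [add_comm 1 t, add_pow]
  refine Finset.single_le_sum (f := fun i => t ^ i * (1:ℝ) ^ (n - i) * n.choose i)
    (fun i _ => by positivity) (Finset.mem_range.mpr (Nat.lt_succ_of_le hk)) |>.trans_eq' ?_
  simp [mul_comm]

/-- For every `ε' > 0` there exist constants `M > 0` and `K > 0` such
that for all nonnegative integers `E` and `F` with `2E − 4F + 4 ≥ 0`,
`C(3E − 4F + 4, 2E − 4F + 4) ≤ K · M^{E − 2F} · (1 + ε')^E`, where `M^{E − 2F}` is a real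
(integer) power of `M`. -/
theorem statement_14 (ε' : ℝ) (hε' : 0 < ε') :
    ∃ M > (0 : ℝ), ∃ K > (0 : ℝ), ∀ E F : ℕ, 0 ≤ 2 * (E : ℤ) - 4 * F + 4 →
      ((3 * (E : ℤ) - 4 * F + 4).toNat.choose (2 * (E : ℤ) - 4 * F + 4).toNat : ℝ) ≤
        K * M ^ ((E : ℤ) - 2 * F) * (1 + ε') ^ E := by
  set c : ℝ := (1 + ε') / ε' with hcdef
  have hc : (0 : ℝ) < c := by positivity
  refine ⟨c ^ (2:ℕ), by positivity, c ^ (4:ℕ), by positivity, ?_⟩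
  intro E F h
  set k := (2 * (E : ℤ) - 4 * F + 4).toNat with hkdef
  have hkz : (k : ℤ) = 2 * ((E : ℤ) - 2 * F) + 4 := by
    rw [hkdef, Int.toNat_of_nonneg h]; ring
  have hn : (3 * (E : ℤ) - 4 * F + 4).toNat = E + k := by omega
  rw [hn]
  have key := aux_choose_le ε' hε'.le (E + k) k le_add_self
  rw [pow_add] at key
  have h1 : ((E + k).choose k : ℝ) ≤ (1 + ε') ^ E * c ^ k := by
    rw [hcdef, div_pow, mul_div_assoc', le_div_iff₀ (by positivity)]
    exact key
  have h2 : (c ^ (4:ℕ)) * (c ^ (2:ℕ)) ^ ((E : ℤ) - 2 * F) = c ^ k := by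
    rw [← zpow_natCast c 4, ← zpow_natCast c 2, ← zpow_mul, ← zpow_add₀ hc.ne',
      ← zpow_natCast c k, hkz]
    ring_nf
  refine h1.trans_eq ?_
  rw [← h2]; ring
end
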